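/- arXiv:1408.1123 — 2 statements merged into one kernel-verified Lean document; each statement's English description precedes it below -/
import Mathlib

section
/- Let f : R → S be a homomorphism of commutative noetherian rings such that S is finitely generated as an R-module, let M be an R-module, and let N be an injective R-module. Then the natural Hom-evaluation map Θ : S ⊗_R Hom_R(M,N) → Hom_R(Hom_R(S,M), N), defined by Θ(s ⊗ ψ)(φ) = ψ(φ(s)), is an isomorphism of S-modules. -/
/-!
`Θ` is natural in its first argument, and both its source and its target are right exact functors
of it: tensoring is right exact, and `Hom_R(-, M)` turns a presentation `R^m → R^n → P → 0` into a
left exact sequence which `Hom_R(-, N)` turns back into a right exact one because `N` is injective.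
On finite free modules `Θ` is an isomorphism by a direct computation in coordinates, so the five
lemma applied to a finite presentation of `S` (which exists since `R` is noetherian) shows that `Θ`
is bijective. It is `S`-linear because it is natural with respect to multiplication by `s`.
-/

universe u

open TensorProduct

noncomputable section

/-- The `S`-module structure on `Hom_R(S, M)` coming from the `S`-action on the first slot:
`(s • φ) t = φ (s * t)`. -/
def homModS {R S : Type u} [CommRing R] [CommRing S] [Algebra R S]
    (M : Type u) [AddCommGroup M] [Module R M] :
    Module S (S →ₗ[R] M) where
  smul s φ := φ.comp (LinearMap.mulLeft R s)
  one_smul φ := by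
    ext t
    show φ (1 * t) = φ t
    rw [one_mul]
  mul_smul s s' φ := by
    ext t
    show φ ((s * s') * t) = φ (s' * (s * t))
    rw [mul_assoc, mul_left_comm]
  smul_zero s := by ext t; rfl
  smul_add s φ ψ := by ext t; rfl
  add_smul s s' φ := by
    ext t
    show φ ((s + s') * t) = φ (s * t) + φ (s' * t)
    rw [add_mul, map_add]
  zero_smul φ := by
    ext t
    show φ (0 * t) = 0
    rw [zero_mul, map_zero]

namespace LinearMap

section Injective

variable {R : Type u} [CommRing R] (N : Type u) [AddCommGroup N] [Module R N]
  [Module.Injective R N] {A B C : Type*} [AddCommGroup A] [AddCommGroup B] [AddCommGroup C]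
  [Module R A] [Module R B] [Module R C]

lemma lcomp_surjective_of_injective {f : A →ₗ[R] B} (hf : Function.Injective f) :
    Function.Surjective (lcomp R N f) :=
  Module.Injective.extension_property R N A B f hf

lemma exact_lcomp_of_exact_of_injective {f : A →ₗ[R] B} {g : B →ₗ[R] C}
    (hfg : Function.Exact f g) : Function.Exact (lcomp R N g) (lcomp R N f) := by
  have hfg' : Function.Exact f g.rangeRestrict := by
    rw [exact_iff, ker_rangeRestrict]
    exact hfg.linearMap_ker_eq
  intro h
  refine ⟨fun hh ↦ ?_, ?_⟩
  · obtain ⟨h', rfl⟩ :=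
      (exact_lcomp_of_exact_of_surjective N hfg' g.surjective_rangeRestrict h).1 hh
    obtain ⟨k, rfl⟩ := lcomp_surjective_of_injective N (range g).injective_subtype h'
    exact ⟨k, rfl⟩
  · rintro ⟨k, rfl⟩
    ext a
    simp [hfg.apply_apply_eq_zero]

end Injective

lemma sum_smulRight_proj_single {R M ι : Type*} [CommRing R] [AddCommGroup M] [Module R M]
    [Fintype ι] [DecidableEq ι] (φ : (ι → R) →ₗ[R] M) :
    ∑ i, (proj i).smulRight (φ (Pi.single i 1)) = φ := by
  refine pi_ext fun j r ↦ ?_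
  rw [sum_apply, Finset.sum_eq_single j]
  · rw [smulRight_apply, proj_apply, Pi.single_eq_same, ← map_smul, ← Pi.single_smul',
      smul_eq_mul, mul_one]
  · intro i _ hij
    rw [smulRight_apply, proj_apply, Pi.single_eq_of_ne hij, zero_smul]
  · simp

end LinearMap

open LinearMap

section HomEvaluation

variable (R : Type*) [CommRing R] (M N : Type*) [AddCommGroup M] [Module R M]
  [AddCommGroup N] [Module R N]

def homEvaluation (P : Type*) [AddCommGroup P] [Module R P] :
    P ⊗[R] (M →ₗ[R] N) →ₗ[R] (P →ₗ[R] M) →ₗ[R] N :=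
  lift ((llcomp R (P →ₗ[R] M) M N).flip ∘ₗ applyₗ)

variable {R M N}

@[simp] lemma homEvaluation_tmul {P : Type*} [AddCommGroup P] [Module R P] (p : P)
    (ψ : M →ₗ[R] N) (φ : P →ₗ[R] M) : homEvaluation R M N P (p ⊗ₜ ψ) φ = ψ (φ p) := rfl

lemma homEvaluation_comp_rTensor {P Q : Type*} [AddCommGroup P] [Module R P]
    [AddCommGroup Q] [Module R Q] (g : P →ₗ[R] Q) :
    homEvaluation R M N Q ∘ₗ g.rTensor _ = lcomp R N (lcomp R M g) ∘ₗ homEvaluation R M N P := by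
  ext p ψ φ
  rfl

variable (R M N) in
/-- The inverse sends `F` to `∑ i, eᵢ ⊗ (m ↦ F (p ↦ pᵢ • m))`. -/
def homEvaluationPiEquiv (ι : Type*) [Fintype ι] [DecidableEq ι] :
    (ι → R) ⊗[R] (M →ₗ[R] N) ≃ₗ[R] ((ι → R) →ₗ[R] M) →ₗ[R] N :=
  LinearEquiv.ofLinearMap (homEvaluation R M N (ι → R))
    (∑ i, TensorProduct.mk R _ _ (Pi.single i 1) ∘ₗ lcomp R N (smulRightₗ (proj i)))
    (by
      ext F φ
      simp only [comp_apply, LinearMap.sum_apply, map_sum, mk_apply, homEvaluation_tmul,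
        lcomp_apply, smulRightₗ_apply, id_apply]
      rw [← map_sum, sum_smulRight_proj_single])
    (TensorProduct.ext' fun p ψ ↦ by
      have h : ∀ i, lcomp R N (smulRightₗ (proj i)) (homEvaluation R M N (ι → R) (p ⊗ₜ ψ)) =
          p i • ψ := fun i ↦ by
        ext m
        simp
      simp only [comp_apply, LinearMap.sum_apply, mk_apply, h, tmul_smul, smul_tmul', ← sum_tmul,
        ← Pi.single_smul', smul_eq_mul, mul_one, Finset.univ_sum_single, id_apply])

end HomEvaluation

theorem homEvaluation_bijective {R : Type u} [CommRing R] (M : Type*) (N : Type u)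
    (P : Type*) [AddCommGroup M] [Module R M] [AddCommGroup N] [Module R N]
    [Module.Injective R N] [AddCommGroup P] [Module R P] [Module.FinitePresentation R P] :
    Function.Bijective (homEvaluation R M N P) := by
  obtain ⟨n, m, π, d, hπ, hdπ⟩ := Module.FinitePresentation.exists_fin' R P
  have hHom : Function.Exact (lcomp R M π) (lcomp R M d) :=
    exact_lcomp_of_exact_of_surjective M hdπ hπ
  exact bijective_of_surjective_of_bijective_of_right_exact (d.rTensor _) (π.rTensor _)
    (lcomp R N (lcomp R M d)) (lcomp R N (lcomp R M π)) (homEvaluation R M N _)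
    (homEvaluation R M N _) (homEvaluation R M N _)
    (homEvaluation_comp_rTensor d).symm (homEvaluation_comp_rTensor π).symm
    (rTensor_exact _ hdπ hπ) (exact_lcomp_of_exact_of_injective N hHom)
    (homEvaluationPiEquiv R M N (Fin m)).surjective
    (homEvaluationPiEquiv R M N (Fin n)).bijective
    (rTensor_surjective _ hπ)
    (lcomp_surjective_of_injective N (lcomp_injective_of_surjective π hπ))

theorem hom_evaluation_iso_general (R S : Type u) [CommRing R] [IsNoetherianRing R]
    [CommRing S] [Algebra R S] [Module.Finite R S]
    (M N : Type u) [AddCommGroup M] [Module R M] [AddCommGroup N] [Module R N]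
    (hN : Module.Injective R N) :
    letI : Module S (S →ₗ[R] M) := homModS M
    ∃ e : (S ⊗[R] (M →ₗ[R] N)) ≃+ ((S →ₗ[R] M) →ₗ[R] N),
      (∀ (s : S) (ψ : M →ₗ[R] N) (φ : S →ₗ[R] M), e (s ⊗ₜ[R] ψ) φ = ψ (φ s)) ∧
      (∀ (s : S) (x : S ⊗[R] (M →ₗ[R] N)) (φ : S →ₗ[R] M),
        e (s • x) φ = e x (s • φ)) := by
  have := Module.finitePresentation_of_finite R S
  refine ⟨(LinearEquiv.ofBijective _ (homEvaluation_bijective M N S)).toAddEquiv,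
    fun s ψ φ ↦ rfl, fun s x φ ↦ ?_⟩
  -- `s • x` is `(mulLeft s).rTensor x` and `s • φ` is `φ ∘ₗ mulLeft s`, both by definition
  exact congr($(homEvaluation_comp_rTensor (M := M) (N := N) (LinearMap.mulLeft R s)) x φ)

/-- Hom-evaluation: for a module-finite algebra `S` over `R`, an `R`-module `M` and an
injective `R`-module `N`, the natural map
`Θ : S ⊗_R Hom_R(M, N) → Hom_R(Hom_R(S, M), N)`, `Θ(s ⊗ ψ)(φ) = ψ(φ(s))`,
is an isomorphism of `S`-modules. -/
theorem hom_evaluation_iso (R S : Type u) [CommRing R] [IsNoetherianRing R]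
    [CommRing S] [IsNoetherianRing S] [Algebra R S] [Module.Finite R S]
    (M N : Type u) [AddCommGroup M] [Module R M] [AddCommGroup N] [Module R N]
    (hN : Module.Injective R N) :
    letI : Module S (S →ₗ[R] M) := homModS M
    ∃ e : (S ⊗[R] (M →ₗ[R] N)) ≃+ ((S →ₗ[R] M) →ₗ[R] N),
      (∀ (s : S) (ψ : M →ₗ[R] N) (φ : S →ₗ[R] M), e (s ⊗ₜ[R] ψ) φ = ψ (φ s)) ∧
      (∀ (s : S) (x : S ⊗[R] (M →ₗ[R] N)) (φ : S →ₗ[R] M),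
        e (s • x) φ = e x (s • φ)) :=
  hom_evaluation_iso_general R S M N hN

end
end

section
/- Let R be a commutative noetherian ring and C an ideal of R that is a semidualizing R-module. Then Hom_R(R ⋈ C, C) ≅ R ⋈ C as R ⋈ C-modules, and Ext_R^i(R ⋈ C, C) = 0 for all i ≥ 1. -/
universe u

open TensorProduct CategoryTheory

noncomputable section




/-- The amalgamated duplication `R ⋈ C` of a ring `R` along an ideal `C`:
the abelian group `R ⊕ C` with multiplication
`(r, c) * (r', c') = (r * r', r * c' + r' * c + c * c')`. -/
def AmalgDup (R : Type u) [CommRing R] (C : Ideal R) : Type u := R × C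

namespace AmalgDup

variable {R : Type u} [CommRing R] {C : Ideal R}

/-- Build an element of `R ⋈ C` from its components. -/
def mk (r : R) (c : C) : AmalgDup R C := (r, c)

/-- First component. -/
def fst (p : AmalgDup R C) : R := p.1

/-- Second component. -/
def snd (p : AmalgDup R C) : C := p.2

theorem ext' {p q : AmalgDup R C} (h1 : p.fst = q.fst) (h2 : (p.snd : R) = (q.snd : R)) :
    p = q :=
  Prod.ext h1 (Subtype.ext h2)

instance : AddCommGroup (AmalgDup R C) := inferInstanceAs (AddCommGroup (R × C))

instance : Mul (AmalgDup R C) :=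
  ⟨fun p q => mk (p.fst * q.fst)
    ⟨p.fst * (q.snd : R) + q.fst * (p.snd : R) + (p.snd : R) * (q.snd : R),
      add_mem (add_mem (C.mul_mem_left _ q.snd.2) (C.mul_mem_left _ p.snd.2))
        (C.mul_mem_left _ q.snd.2)⟩⟩

instance : One (AmalgDup R C) := ⟨mk 1 0⟩

@[simp] theorem mk_fst (r : R) (c : C) : (mk r c : AmalgDup R C).fst = r := rfl

@[simp] theorem mk_snd (r : R) (c : C) : ((mk r c : AmalgDup R C).snd : R) = (c : R) := rfl

@[simp] theorem mul_fst (p q : AmalgDup R C) : (p * q).fst = p.fst * q.fst := rfl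

@[simp] theorem mul_snd (p q : AmalgDup R C) :
    ((p * q).snd : R) = p.fst * (q.snd : R) + q.fst * (p.snd : R) + (p.snd : R) * (q.snd : R) :=
  rfl

@[simp] theorem add_fst (p q : AmalgDup R C) : (p + q).fst = p.fst + q.fst := rfl

@[simp] theorem add_snd (p q : AmalgDup R C) :
    ((p + q).snd : R) = (p.snd : R) + (q.snd : R) := rfl

@[simp] theorem one_fst : (1 : AmalgDup R C).fst = 1 := rfl

@[simp] theorem one_snd : ((1 : AmalgDup R C).snd : R) = 0 := rfl

@[simp] theorem zero_fst : (0 : AmalgDup R C).fst = 0 := rfl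

@[simp] theorem zero_snd : ((0 : AmalgDup R C).snd : R) = 0 := rfl

instance instCommRing : CommRing (AmalgDup R C) :=
  { (inferInstance : AddCommGroup (AmalgDup R C)), (inferInstance : Mul (AmalgDup R C)),
    (inferInstance : One (AmalgDup R C)) with
    mul_assoc := fun a b c => ext' (by simp [mul_assoc]) (by simp; ring)
    one_mul := fun a => ext' (by simp) (by simp)
    mul_one := fun a => ext' (by simp) (by simp)
    left_distrib := fun a b c => ext' (by simp [mul_add]) (by simp; ring)
    right_distrib := fun a b c => ext' (by simp [add_mul]) (by simp; ring)
    zero_mul := fun a => ext' (by simp) (by simp)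
    mul_zero := fun a => ext' (by simp) (by simp)
    mul_comm := fun a b => ext' (by simp [mul_comm]) (by simp; ring) }

/-- The canonical inclusion `R → R ⋈ C`. -/
def incl : R →+* AmalgDup R C where
  toFun r := mk r 0
  map_one' := rfl
  map_mul' r s := (ext' (by simp) (by simp)).symm
  map_zero' := rfl
  map_add' r s := (ext' (by simp) (by simp)).symm

/-- The canonical projection `R ⋈ C → R`. -/
def proj : AmalgDup R C →+* R where
  toFun p := p.fst
  map_one' := rfl
  map_mul' _ _ := rfl
  map_zero' := rfl
  map_add' _ _ := rfl

end AmalgDup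





/-- The `ModuleCat`-valued `Ext` of two modules. -/
abbrev extMod (R : Type u) [CommRing R] (M N : Type u)
    [AddCommGroup M] [Module R M] [AddCommGroup N] [Module R N] (i : ℕ) : ModuleCat.{u} R :=
  ((Ext R (ModuleCat.{u} R) i).obj (Opposite.op (ModuleCat.of R M))).obj (ModuleCat.of R N)

/-- `C` is a semidualizing `R`-module. -/
def IsSemidualizing (R : Type u) [CommRing R]
    (C : Type u) [AddCommGroup C] [Module R C] : Prop :=
  Module.Finite R C ∧
  Function.Bijective (fun r : R => (r • LinearMap.id : C →ₗ[R] C)) ∧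
  ∀ i : ℕ, 1 ≤ i → Subsingleton (extMod R C C i)

/-- Property (*) for the triple `(R, S, C)`, relative to the retraction `g` of the
algebra map `R → S`. -/
def PropertyStar (R S : Type u) [CommRing R] [CommRing S] [Algebra R S] (g : S →+* R)
    (C : Type u) [AddCommGroup C] [Module R C] : Prop :=
  g.comp (algebraMap R S) = RingHom.id R ∧
  (letI : Module S (S →ₗ[R] C) := homModS C
   Nonempty ((S →ₗ[R] C) ≃ₗ[S] S)) ∧
  ∀ i : ℕ, 1 ≤ i → Subsingleton (extMod R S C i)

/-- Property (**): Property (*) together with `C ≅ ker g` as `R`-modules. -/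
def PropertyStarStar (R S : Type u) [CommRing R] [CommRing S] [Algebra R S] (g : S →+* R)
    (C : Type u) [AddCommGroup C] [Module R C] : Prop :=
  PropertyStar R S g C ∧
  (letI : Module R ↥(RingHom.ker g) := Module.compHom _ (algebraMap R S)
   Nonempty (↥(RingHom.ker g) ≃ₗ[R] C))


/-!
As an `R`-module `R ⋈ C ≅ R ⊕ C`, so `Ext^i_R(R ⋈ C, C) ≅ Ext^i_R(R, C) ⊕ Ext^i_R(C, C)`, and both
summands vanish for `i ≥ 1`: `R` is projective and `C` is semidualizing.

An `R`-linear `φ : R ⋈ C → C` is determined by `φ (1, 0) ∈ C` and by its restriction to `C`,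
which is a homothety `a`. With `π (r, c) = c` this gives `φ = s • π` for
`s = (a - φ (1, 0), φ (1, 0))`, and `s` is unique because homotheties of `C` are determined by
their scalar: `Hom_R(R ⋈ C, C)` is free of rank one over `R ⋈ C` on `π`.
-/

open Limits

instance CategoryTheory.Functor.leftDerived_additive {𝒞 𝒟 : Type*} [Category 𝒞] [Category 𝒟]
    [Abelian 𝒞] [HasProjectiveResolutions 𝒞] [Abelian 𝒟] (F : 𝒞 ⥤ 𝒟) [F.Additive] (n : ℕ) :
    (F.leftDerived n).Additive where
  map_add {X Y f g} := by
    obtain ⟨P⟩ : Nonempty (ProjectiveResolution X) := HasProjectiveResolution.out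
    obtain ⟨Q⟩ : Nonempty (ProjectiveResolution Y) := HasProjectiveResolution.out
    -- the sum of the chosen lifts of `f` and `g` to the resolutions is a lift of `f + g`
    rw [F.leftDerived_map_eq n f (ProjectiveResolution.lift f P Q)
        (ProjectiveResolution.lift_commutes f P Q),
      F.leftDerived_map_eq n g (ProjectiveResolution.lift g P Q)
        (ProjectiveResolution.lift_commutes g P Q),
      F.leftDerived_map_eq n (f + g)
        (ProjectiveResolution.lift f P Q + ProjectiveResolution.lift g P Q)
        (by rw [Preadditive.add_comp, ProjectiveResolution.lift_commutes,
            ProjectiveResolution.lift_commutes, Functor.map_add, Preadditive.comp_add]),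
      Functor.map_add, Preadditive.add_comp, Preadditive.comp_add]

theorem CategoryTheory.Functor.isZero_obj_of_id_eq_add {𝒞 𝒟 : Type*} [Category 𝒞] [Category 𝒟]
    [Preadditive 𝒞] [Preadditive 𝒟] (F : 𝒞 ⥤ 𝒟) [F.Additive] {X Y₁ Y₂ : 𝒞}
    (p₁ : X ⟶ Y₁) (i₁ : Y₁ ⟶ X) (p₂ : X ⟶ Y₂) (i₂ : Y₂ ⟶ X) (h : p₁ ≫ i₁ + p₂ ≫ i₂ = 𝟙 X)
    (h₁ : IsZero (F.obj Y₁)) (h₂ : IsZero (F.obj Y₂)) : IsZero (F.obj X) := by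
  rw [IsZero.iff_id_eq_zero, ← F.map_id, ← h, F.map_add, F.map_comp, F.map_comp,
    h₁.eq_zero_of_tgt (F.map p₁), h₂.eq_zero_of_tgt (F.map p₂), zero_comp, zero_comp, add_zero]

section extMod

variable {R : Type u} [CommRing R] {M N P Y : Type u} [AddCommGroup M] [Module R M]
  [AddCommGroup N] [Module R N] [AddCommGroup P] [Module R P] [AddCommGroup Y] [Module R Y]

theorem subsingleton_extMod_of_projective [Module.Projective R M] {i : ℕ} (hi : 1 ≤ i) :
    Subsingleton (extMod R M Y i) := by
  obtain ⟨j, rfl⟩ := Nat.exists_eq_add_of_le' hi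
  have : Projective (ModuleCat.of R M) := (IsProjective.iff_projective M).mp inferInstance
  exact ModuleCat.subsingleton_of_isZero
    (isZero_Ext_succ_of_projective (ModuleCat.of R M) (ModuleCat.of R Y) j)

theorem subsingleton_extMod_of_linearEquiv_prod (e : M ≃ₗ[R] N × P) {i : ℕ}
    (hN : Subsingleton (extMod R N Y i)) (hP : Subsingleton (extMod R P Y i)) :
    Subsingleton (extMod R M Y i) := by
  let L := ((linearYoneda R (ModuleCat.{u} R)).obj (ModuleCat.of R Y)).rightOp.leftDerived i
  have hsplit : ModuleCat.ofHom (LinearMap.fst R N P ∘ₗ e.toLinearMap) ≫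
      ModuleCat.ofHom (e.symm.toLinearMap ∘ₗ LinearMap.inl R N P) +
      ModuleCat.ofHom (LinearMap.snd R N P ∘ₗ e.toLinearMap) ≫
      ModuleCat.ofHom (e.symm.toLinearMap ∘ₗ LinearMap.inr R N P) = 𝟙 (ModuleCat.of R M) := by
    ext m
    apply e.injective
    simp
  refine ModuleCat.subsingleton_of_isZero (L.isZero_obj_of_id_eq_add _ _ _ _ hsplit ?_ ?_).unop
  · exact (ModuleCat.isZero_of_subsingleton (extMod R N Y i)).op
  · exact (ModuleCat.isZero_of_subsingleton (extMod R P Y i)).op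

end extMod

namespace AmalgDup

variable {R : Type u} [CommRing R] {C : Ideal R}

instance instAlgebra : Algebra R (AmalgDup R C) := incl.toAlgebra

@[simp] theorem incl_fst (r : R) : (incl r : AmalgDup R C).fst = r := rfl

@[simp] theorem incl_snd (r : R) : ((incl r : AmalgDup R C).snd : R) = 0 := rfl

@[simp] theorem smul_fst (r : R) (p : AmalgDup R C) : (r • p).fst = r * p.fst :=
  (mul_fst (incl r) p).trans (by simp)

@[simp] theorem smul_snd (r : R) (p : AmalgDup R C) : ((r • p).snd : R) = r * (p.snd : R) :=
  (mul_snd (incl r) p).trans (by simp)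

def inr : C →ₗ[R] AmalgDup R C where
  toFun c := mk 0 c
  map_add' _ _ := ext' (by simp) (by simp)
  map_smul' _ _ := ext' (by simp) (by simp)

@[simp] theorem inr_fst (c : C) : (inr c : AmalgDup R C).fst = 0 := rfl

@[simp] theorem inr_snd (c : C) : ((inr c : AmalgDup R C).snd : R) = c := rfl

def sndₗ : AmalgDup R C →ₗ[R] C where
  toFun := snd
  map_add' _ _ := rfl
  map_smul' _ _ := Subtype.ext (smul_snd _ _)

def linearEquivProd : AmalgDup R C ≃ₗ[R] R × C where
  toFun p := (p.fst, p.snd)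
  invFun q := mk q.1 q.2
  map_add' _ _ := rfl
  map_smul' _ _ := Prod.ext (smul_fst _ _) (Subtype.ext (smul_snd _ _))
  left_inv _ := rfl
  right_inv _ := rfl

theorem eq_fst_smul_one_add_inr_snd (p : AmalgDup R C) : p = p.fst • 1 + inr p.snd :=
  ext' (by simp) (by simp)

instance instModuleHom : Module (AmalgDup R C) (AmalgDup R C →ₗ[R] C) := homModS C

theorem smul_sndₗ_apply (s p : AmalgDup R C) :
    ((s • sndₗ) p : R) = s.fst * p.snd + p.fst * s.snd + s.snd * p.snd :=
  mul_snd s p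

theorem bijective_smul_sndₗ
    (hC : Function.Bijective (fun r : R => (r • LinearMap.id : C →ₗ[R] C))) :
    Function.Bijective (fun s : AmalgDup R C => s • (sndₗ : AmalgDup R C →ₗ[R] C)) := by
  constructor
  · intro s t hst
    have hsnd : (s.snd : R) = t.snd := by
      simpa [smul_sndₗ_apply] using congr_arg (fun φ => (φ 1 : R)) hst
    have hhom : (fun r : R => (r • LinearMap.id : C →ₗ[R] C)) (s.fst + s.snd) =
        (fun r : R => (r • LinearMap.id : C →ₗ[R] C)) (t.fst + t.snd) := by
      ext c
      simpa [smul_sndₗ_apply, add_mul] using congr_arg (fun φ => (φ (inr c) : R)) hst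
    exact ext' (by linear_combination hC.1 hhom - hsnd) hsnd
  · intro φ
    obtain ⟨a, ha⟩ := hC.2 (φ ∘ₗ inr)
    have hφ (p : AmalgDup R C) : (φ p : R) = p.fst * φ 1 + a * p.snd := by
      have hinr : (φ (inr p.snd) : R) = a * p.snd := by
        rw [← LinearMap.comp_apply φ inr, ← ha]; rfl
      conv_lhs => rw [eq_fst_smul_one_add_inr_snd p]
      rw [map_add, map_smul, Submodule.coe_add, Submodule.coe_smul, smul_eq_mul, hinr]
    refine ⟨mk (a - φ 1) (φ 1), LinearMap.ext fun p => Subtype.ext ?_⟩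
    rw [smul_sndₗ_apply, mk_fst, mk_snd, hφ p]
    ring

end AmalgDup

theorem amalgDup_hom_iso_and_ext_vanishing_general (R : Type u) [CommRing R]
    (C : Ideal R) (hC : IsSemidualizing R ↥C) :
    letI : Algebra R (AmalgDup R C) := (AmalgDup.incl : R →+* AmalgDup R C).toAlgebra
    letI : Module (AmalgDup R C) (AmalgDup R C →ₗ[R] ↥C) := homModS ↥C
    Nonempty ((AmalgDup R C →ₗ[R] ↥C) ≃ₗ[AmalgDup R C] AmalgDup R C) ∧
    ∀ i : ℕ, 1 ≤ i → Subsingleton (extMod R (AmalgDup R C) ↥C i) := by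
  obtain ⟨-, hhomothety, hext⟩ := hC
  refine ⟨⟨(LinearEquiv.ofBijective (LinearMap.toSpanSingleton _ _ AmalgDup.sndₗ)
    (AmalgDup.bijective_smul_sndₗ hhomothety)).symm⟩, fun i hi => ?_⟩
  exact subsingleton_extMod_of_linearEquiv_prod AmalgDup.linearEquivProd
    (subsingleton_extMod_of_projective hi) (hext i hi)

/-- If an ideal `C` of `R` is semidualizing as an `R`-module, then
`Hom_R(R ⋈ C, C) ≅ R ⋈ C` as `R ⋈ C`-modules, and `Ext_R^i(R ⋈ C, C) = 0` for all
`i ≥ 1`.  Here `R ⋈ C` is an `R`-module via `f : r ↦ (r, 0)`, and `Hom_R(R ⋈ C, C)` is an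
`R ⋈ C`-module via the action on the first slot. -/
theorem amalgDup_hom_iso_and_ext_vanishing (R : Type u) [CommRing R] [IsNoetherianRing R]
    (C : Ideal R) (hC : IsSemidualizing R ↥C) :
    letI : Algebra R (AmalgDup R C) := (AmalgDup.incl : R →+* AmalgDup R C).toAlgebra
    letI : Module (AmalgDup R C) (AmalgDup R C →ₗ[R] ↥C) := homModS ↥C
    Nonempty ((AmalgDup R C →ₗ[R] ↥C) ≃ₗ[AmalgDup R C] AmalgDup R C) ∧
    ∀ i : ℕ, 1 ≤ i → Subsingleton (extMod R (AmalgDup R C) ↥C i) :=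
  amalgDup_hom_iso_and_ext_vanishing_general R C hC

end
end
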